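/- Let p/q be rational, A : ℝ/ℤ → SL(2,ℝ), and define the iterates A_s(x) = A(x + (s−1)p/q)···A(x) for s ≥ 1, with A_0 = id. For l ∈ {0, 1} and 0 ≤ k ≤ q−1 set W_k(x) = ∑_{s=0}^{q−1} R_{ks/q} R_{ls/(2q)} A_s(x). Then for every x, W_k(x + p/q) A(x) = R_{−(2k+l)/(2q)} ( W_k(x) + (−1)^l A_q(x) − id ). -/

import Mathlib

open Real

noncomputable section

/-- The rotation matrix `R_θ ∈ SO(2,ℝ)`. -/
def RotR (θ : ℝ) : Matrix (Fin 2) (Fin 2) ℝ :=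
  !![Real.cos (2 * π * θ), -Real.sin (2 * π * θ);
     Real.sin (2 * π * θ), Real.cos (2 * π * θ)]

/-- Iterates of the cocycle: `cocycleIterR α A s x = A(x+(s-1)α) ⋯ A(x)`, with `A_0 = id`. -/
def cocycleIterR (α : ℝ) (A : ℝ → Matrix (Fin 2) (Fin 2) ℝ) :
    ℕ → ℝ → Matrix (Fin 2) (Fin 2) ℝ
  | 0 => fun _ => 1
  | s + 1 => fun x => A (x + (s : ℝ) * α) * cocycleIterR α A s x

/-- The discrete Fourier transform `W_k(x) = ∑_{s=0}^{q−1} R_{ks/q} R_{ls/(2q)} A_s(x)`. -/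
def Wdft (p : ℤ) (q : ℕ) (l : ℕ) (A : ℝ → Matrix (Fin 2) (Fin 2) ℝ) (k : ℕ) (x : ℝ) :
    Matrix (Fin 2) (Fin 2) ℝ :=
  ∑ s ∈ Finset.range q,
    RotR (((k * s : ℕ) : ℝ) / (q : ℝ)) * RotR (((l * s : ℕ) : ℝ) / (2 * (q : ℝ))) *
      cocycleIterR ((p : ℝ) / (q : ℝ)) A s x

/-!
Since `A_s(x + p/q) A(x) = A_{s+1}(x)`, right multiplication by `A(x)` shifts the index of the
sum `W_k(x) = ∑ R_{sc} A_s(x)`, `c = (2k+l)/(2q)`; pulling out `R_{-c}` restores the matching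
phase `R_{(s+1)c}`. The shifted sum differs from `W_k(x)` only by the boundary terms
`R_{qc} A_q(x) = (-1)^l A_q(x)` and `R_0 A_0(x) = id`.
-/

theorem RotR_add (a b : ℝ) : RotR (a + b) = RotR a * RotR b := by
  ext i j
  fin_cases i <;> fin_cases j <;>
    simp [RotR, Matrix.mul_apply, mul_add, Real.cos_add, Real.sin_add] <;> ring

theorem RotR_nat_div_two (n : ℕ) : RotR ((n : ℝ) / 2) = ((-1 : ℝ) ^ n) • 1 := by
  have h : 2 * π * ((n : ℝ) / 2) = n * π := by ring
  ext i j
  fin_cases i <;> fin_cases j <;> simp [RotR, h, Real.cos_nat_mul_pi]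

theorem RotR_zero : RotR 0 = 1 := by
  simpa using RotR_nat_div_two 0

theorem cocycleIterR_add_mul (α : ℝ) (A : ℝ → Matrix (Fin 2) (Fin 2) ℝ) (s : ℕ) (x : ℝ) :
    cocycleIterR α A s (x + α) * A x = cocycleIterR α A (s + 1) x := by
  induction s with
  | zero => simp [cocycleIterR]
  | succ n ih =>
    rw [cocycleIterR, mul_assoc, ih, cocycleIterR]
    congr 2
    push_cast
    ring

theorem Wdft_eq_sum_RotR_mul (p : ℤ) (q l : ℕ) (A : ℝ → Matrix (Fin 2) (Fin 2) ℝ) (k : ℕ)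
    (x : ℝ) :
    Wdft p q l A k x = ∑ s ∈ Finset.range q,
      RotR (s * (((2 * k + l : ℕ) : ℝ) / (2 * q))) * cocycleIterR ((p : ℝ) / q) A s x := by
  refine Finset.sum_congr rfl fun s _ => ?_
  rw [← RotR_add]
  congr 2
  push_cast
  ring

theorem Finset.sum_range_succ_shift {M : Type*} [AddCommGroup M] (f : ℕ → M) (n : ℕ) :
    ∑ s ∈ Finset.range n, f (s + 1) = ∑ s ∈ Finset.range n, f s + f n - f 0 := by
  rw [eq_sub_iff_add_eq, ← Finset.sum_range_succ', Finset.sum_range_succ]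

theorem Wdft_identity_general (p : ℤ) (q : ℕ) (hq : 0 < q)
    (A : ℝ → Matrix (Fin 2) (Fin 2) ℝ)
    (l : ℕ) (k : ℕ) (x : ℝ) :
    Wdft p q l A k (x + (p : ℝ) / (q : ℝ)) * A x =
      RotR (-(((2 * k + l : ℕ) : ℝ) / (2 * (q : ℝ)))) *
        (Wdft p q l A k x + ((-1 : ℝ)) ^ l • cocycleIterR ((p : ℝ) / (q : ℝ)) A q x - 1) := by
  set c : ℝ := ((2 * k + l : ℕ) : ℝ) / (2 * q)
  set f : ℕ → Matrix (Fin 2) (Fin 2) ℝ := fun s ↦ RotR (s * c) * cocycleIterR ((p : ℝ) / q) A s x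
  have hqc : RotR (q * c) = ((-1 : ℝ) ^ (2 * k + l)) • 1 := by
    have hq' : (q : ℝ) ≠ 0 := by positivity
    rw [← RotR_nat_div_two]
    congr 1
    simp only [c]
    field_simp
  have hf_succ (s : ℕ) : RotR (s * c) * cocycleIterR ((p : ℝ) / q) A (s + 1) x =
      RotR (-c) * f (s + 1) := by
    rw [← mul_assoc, ← RotR_add]
    congr 2
    push_cast
    ring
  have hf_zero : f 0 = 1 := by simp [f, cocycleIterR, RotR_zero]
  have hf_top : f q = (-1 : ℝ) ^ l • cocycleIterR ((p : ℝ) / q) A q x := by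
    simp [f, hqc, pow_add]
  calc Wdft p q l A k (x + p / q) * A x
      = ∑ s ∈ Finset.range q, RotR (-c) * f (s + 1) := by
        rw [Wdft_eq_sum_RotR_mul, Finset.sum_mul]
        refine Finset.sum_congr rfl fun s _ => ?_
        rw [mul_assoc, cocycleIterR_add_mul]
        exact hf_succ s
    _ = RotR (-c) * (Wdft p q l A k x + (-1 : ℝ) ^ l • cocycleIterR ((p : ℝ) / q) A q x - 1) := by
        rw [← Finset.mul_sum, Finset.sum_range_succ_shift, hf_zero, hf_top,
          Wdft_eq_sum_RotR_mul]

/-- **Exact identity for the discrete Fourier transform of the iterates:**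
`W_k(x + p/q) A(x) = R_{−(2k+l)/(2q)} ( W_k(x) + (−1)^l A_q(x) − id )`. -/
theorem Wdft_identity (p : ℤ) (q : ℕ) (hq : 0 < q)
    (A : ℝ → Matrix (Fin 2) (Fin 2) ℝ)
    (hper : ∀ x : ℝ, A (x + 1) = A x) (hdet : ∀ x : ℝ, (A x).det = 1)
    (l : ℕ) (hl : l ≤ 1) (k : ℕ) (hk : k < q) (x : ℝ) :
    Wdft p q l A k (x + (p : ℝ) / (q : ℝ)) * A x =
      RotR (-(((2 * k + l : ℕ) : ℝ) / (2 * (q : ℝ)))) *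
        (Wdft p q l A k x + ((-1 : ℝ)) ^ l • cocycleIterR ((p : ℝ) / (q : ℝ)) A q x - 1) :=
  Wdft_identity_general p q hq A l k x
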